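/- Let F₁ and F₂ be saturated FDFAs with leading automata Q₁, Q₂. Define H' as the FDFA with leading automaton Q₁ × Q₂ and, for each state (q₁,q₂), the progress DFA P¹_{q₁} ⊕ P²_{q₂} whose accepting states are pairs where at least one component is accepting. Then L(H') = L(F₁) ∪ L(F₂), and H' is saturated. -/

import Mathlib

open Classical

/-- `wpow v n` is the word `v` repeated `n` times. -/
def wpow {α : Type} (v : List α) : ℕ → List α
  | 0 => []
  | n + 1 => wpow v n ++ v

/-- The ultimately periodic infinite word `u·v^ω` (meaningful when `v ≠ []`). -/
def upWord {α : Type} [Inhabited α] (u v : List α) : ℕ → α := fun n =>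
  if n < u.length then u.getD n default
  else v.getD ((n - u.length) % v.length) default

/-- `l` is a prefix of the infinite word `w`. -/
def prefOf {α : Type} [Inhabited α] (l : List α) (w : ℕ → α) : Prop :=
  ∀ i < l.length, w i = l.getD i default

/-- A complete deterministic automaton (no acceptance condition). -/
structure DetAuto (α : Type) : Type 1 where
  State : Type
  [fin : Fintype State]
  init : State
  step : State → α → State

attribute [instance] DetAuto.fin

namespace DetAuto

variable {α : Type}

/-- The state reached from `q` after reading the finite word `w`. -/
def run (A : DetAuto α) (q : A.State) (w : List α) : A.State := w.foldl A.step q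

/-- The state reached from the initial state after reading `w`. -/
def eval (A : DetAuto α) (w : List α) : A.State := A.run A.init w

/-- The (infinite) run of `A` on an infinite word `w`. -/
def runSeq (A : DetAuto α) (w : ℕ → α) : ℕ → A.State
  | 0 => A.init
  | n + 1 => A.step (A.runSeq w n) (w n)

lemma exists_rep (A : DetAuto α) (u v : List α) :
    ∃ i, ∃ j, 1 ≤ j ∧ A.eval (u ++ wpow v i) = A.eval (u ++ wpow v (i + j)) := by
  obtain ⟨a, b, hab, hfab⟩ :=
    Finite.exists_ne_map_eq_of_infinite (fun n : ℕ => A.eval (u ++ wpow v n))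
  rcases Nat.lt_or_gt_of_ne hab with h | h
  · exact ⟨a, b - a, by omega, by rw [Nat.add_sub_cancel' h.le]; exact hfab⟩
  · exact ⟨b, a - b, by omega, by rw [Nat.add_sub_cancel' h.le]; exact hfab.symm⟩

/-- The least `i` in the normalization of `(u,v)` w.r.t. `A`. -/
noncomputable def normI (A : DetAuto α) (u v : List α) : ℕ :=
  Nat.find (A.exists_rep u v)

lemma normI_spec (A : DetAuto α) (u v : List α) :
    ∃ j, 1 ≤ j ∧ A.eval (u ++ wpow v (A.normI u v))
      = A.eval (u ++ wpow v (A.normI u v + j)) :=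
  Nat.find_spec (A.exists_rep u v)

/-- The least `j` in the normalization of `(u,v)` w.r.t. `A`. -/
noncomputable def normJ (A : DetAuto α) (u v : List α) : ℕ :=
  Nat.find (A.normI_spec u v)

/-- The normalization `(x, y) = (u·v^i, v^j)` of `(u,v)` w.r.t. `A`. -/
noncomputable def normalize (A : DetAuto α) (u v : List α) : List α × List α :=
  (u ++ wpow v (A.normI u v), wpow v (A.normJ u v))

/-- The product automaton. -/
def prod (A B : DetAuto α) : DetAuto α where
  State := A.State × B.State
  init := (A.init, B.init)
  step := fun p σ => (A.step p.1 σ, B.step p.2 σ)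

end DetAuto

/-- A family of DFAs: a leading automaton and a progress DFA for each of its states. -/
structure FDFA (α : Type) : Type 1 where
  leading : DetAuto α
  pState : leading.State → Type
  [pFin : ∀ q, Fintype (pState q)]
  pInit : ∀ q, pState q
  pStep : ∀ q, pState q → α → pState q
  pAcc : ∀ q, Set (pState q)

attribute [instance] FDFA.pFin

namespace FDFA

variable {α : Type}

/-- The progress DFA at state `q` accepts the finite word `y`. -/
def progAccept (F : FDFA α) (q : F.leading.State) (y : List α) : Prop :=
  y.foldl (F.pStep q) (F.pInit q) ∈ F.pAcc q

/-- `F` accepts the pair `(u, v)`: with `(x,y)` the normalization of `(u,v)` w.r.t.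
the leading automaton, the progress DFA at the state reached on `x` accepts `y`. -/
noncomputable def Accept (F : FDFA α) (u v : List α) : Prop :=
  F.progAccept (F.leading.eval (F.leading.normalize u v).1) (F.leading.normalize u v).2

/-- `F` is saturated: acceptance of `(u,v)` depends only on the infinite word `u·v^ω`. -/
def Saturated [Inhabited α] (F : FDFA α) : Prop :=
  ∀ u v u' v' : List α, v ≠ [] → v' ≠ [] → upWord u v = upWord u' v' →
    (F.Accept u v ↔ F.Accept u' v')

/-- The complement FDFA: same structure, complemented accepting states. -/
def compl (F : FDFA α) : FDFA α :=
  { F with pAcc := fun q => (F.pAcc q)ᶜ }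

end FDFA

/-- The union-product FDFA: product leading automaton, product progress DFAs with
accepting states `(F₁ × A₂) ∪ (A₁ × F₂)`. -/
def FDFA.union {α : Type} (F G : FDFA α) : FDFA α where
  leading := F.leading.prod G.leading
  pState := fun q => F.pState q.1 × G.pState q.2
  pInit := fun q => (F.pInit q.1, G.pInit q.2)
  pStep := fun q p σ => (F.pStep q.1 p.1 σ, G.pStep q.2 p.2 σ)
  pAcc := fun q => {p | p.1 ∈ F.pAcc q.1 ∨ p.2 ∈ G.pAcc q.2}

/- The normalization `(x, y)` of `(u, v)` w.r.t. the product leading automaton satisfies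
`x·y^ω = u·v^ω`, and it is its own normalization w.r.t. each factor, since both factors return
to the state they reach on `x` after reading `y`. So the product progress DFA at `x` runs both
progress DFAs on the same pair `(x, y)`, and saturation of `F₁`, `F₂` transfers acceptance from
`(x, y)` back to `(u, v)`. -/

section wpow

variable {α : Type}

lemma length_wpow (v : List α) (n : ℕ) : (wpow v n).length = n * v.length := by
  induction n with
  | zero => simp [wpow]
  | succ n ih => simp [wpow, ih, Nat.succ_mul]

lemma wpow_add (v : List α) (m n : ℕ) : wpow v (m + n) = wpow v m ++ wpow v n := by
  induction n with
  | zero => simp [wpow]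
  | succ n ih => simp [wpow, ih]

lemma wpow_ne_nil {v : List α} (hv : v ≠ []) {n : ℕ} (hn : n ≠ 0) : wpow v n ≠ [] := by
  rw [← List.length_pos_iff, length_wpow]
  exact Nat.mul_pos (Nat.pos_of_ne_zero hn) (List.length_pos_iff.mpr hv)

lemma getD_wpow [Inhabited α] (v : List α) {n m : ℕ} (hm : m < n * v.length) :
    (wpow v n).getD m default = v.getD (m % v.length) default := by
  induction n with
  | zero => simp at hm
  | succ n ih =>
    rw [wpow]
    by_cases h : m < n * v.length
    · rw [List.getD_append _ _ _ _ (by rwa [length_wpow]), ih h]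
    · have hle : n * v.length ≤ m := not_lt.mp h
      rw [List.getD_append_right _ _ _ _ (by rwa [length_wpow]), length_wpow]
      obtain ⟨k, rfl⟩ := Nat.exists_eq_add_of_le hle
      have hk : k < v.length := by rw [Nat.succ_mul] at hm; omega
      rw [Nat.add_sub_cancel_left, Nat.mul_add_mod_self_right, Nat.mod_eq_of_lt hk]

lemma upWord_append_wpow [Inhabited α] (u : List α) {v : List α} (hv : v ≠ []) (i : ℕ)
    {j : ℕ} (hj : j ≠ 0) : upWord (u ++ wpow v i) (wpow v j) = upWord u v := by
  have hjv : 0 < j * v.length :=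
    Nat.mul_pos (Nat.pos_of_ne_zero hj) (List.length_pos_iff.mpr hv)
  funext n
  unfold upWord
  rw [List.length_append, length_wpow, length_wpow]
  by_cases hu : n < u.length
  · rw [if_pos (by omega), if_pos hu, List.getD_append _ _ _ _ hu]
  rw [if_neg hu, List.getD_append_right _ _ _ _ (not_lt.mp hu)]
  by_cases hi : n < u.length + i * v.length
  · rw [if_pos hi, getD_wpow v (by omega)]
  · rw [if_neg hi, getD_wpow v (Nat.mod_lt _ hjv), Nat.mod_mod_of_dvd _ ⟨j, by ring⟩]
    have hsplit : n - u.length = (n - (u.length + i * v.length)) + i * v.length := by omega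
    rw [hsplit, Nat.add_mul_mod_self_right]

end wpow

namespace DetAuto

variable {α : Type}

lemma run_prod (A B : DetAuto α) (p : A.State) (q : B.State) (w : List α) :
    (A.prod B).run (p, q) w = (A.run p w, B.run q w) := by
  induction w generalizing p q with
  | nil => rfl
  | cons a w ih => exact ih (A.step p a) (B.step q a)

lemma eval_prod (A B : DetAuto α) (w : List α) :
    (A.prod B).eval w = (A.eval w, B.eval w) :=
  run_prod A B A.init B.init w

lemma normalize_of_eval_append_eq (A : DetAuto α) {x y : List α}
    (h : A.eval (x ++ y) = A.eval x) : A.normalize x y = (x, y) := by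
  have hI : A.normI x y = 0 :=
    Nat.find_eq_zero _ |>.mpr ⟨1, le_rfl, by simpa [wpow] using h.symm⟩
  have hJ : A.normJ x y = 1 := by
    refine Nat.find_eq_iff _ |>.mpr ⟨⟨le_rfl, ?_⟩, fun n hn hc => by omega⟩
    simpa [hI, wpow] using h.symm
  simp [normalize, hI, hJ, wpow]

lemma eval_normalize_append (A : DetAuto α) (u v : List α) :
    A.eval ((A.normalize u v).1 ++ (A.normalize u v).2) = A.eval (A.normalize u v).1 := by
  obtain ⟨-, hJ⟩ := Nat.find_spec (A.normI_spec u v)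
  simpa [normalize, normJ, ← wpow_add] using hJ.symm

lemma normJ_ne_zero (A : DetAuto α) (u v : List α) : A.normJ u v ≠ 0 :=
  Nat.one_le_iff_ne_zero.mp (Nat.find_spec (A.normI_spec u v)).1

lemma upWord_normalize [Inhabited α] (A : DetAuto α) (u : List α) {v : List α}
    (hv : v ≠ []) : upWord (A.normalize u v).1 (A.normalize u v).2 = upWord u v :=
  upWord_append_wpow u hv _ (A.normJ_ne_zero u v)

lemma normalize_snd_ne_nil (A : DetAuto α) (u : List α) {v : List α} (hv : v ≠ []) :
    (A.normalize u v).2 ≠ [] :=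
  wpow_ne_nil hv (A.normJ_ne_zero u v)

end DetAuto

namespace FDFA

variable {α : Type}

lemma accept_iff_of_eval_append_eq (F : FDFA α) {x y : List α}
    (h : F.leading.eval (x ++ y) = F.leading.eval x) :
    F.Accept x y ↔ F.progAccept (F.leading.eval x) y := by
  rw [Accept, F.leading.normalize_of_eval_append_eq h]

lemma foldl_union_pStep (F G : FDFA α) (q : (F.union G).leading.State)
    (p : (F.union G).pState q) (y : List α) :
    y.foldl ((F.union G).pStep q) p = (y.foldl (F.pStep q.1) p.1, y.foldl (G.pStep q.2) p.2) := by
  induction y generalizing p with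
  | nil => rfl
  | cons a y ih => exact ih _

lemma progAccept_union (F G : FDFA α) (q : (F.union G).leading.State) (y : List α) :
    (F.union G).progAccept q y ↔ F.progAccept q.1 y ∨ G.progAccept q.2 y := by
  unfold progAccept
  rw [foldl_union_pStep]
  rfl

lemma accept_union_iff (F G : FDFA α) (u v : List α) :
    (F.union G).Accept u v ↔
      F.Accept ((F.union G).leading.normalize u v).1 ((F.union G).leading.normalize u v).2 ∨
      G.Accept ((F.union G).leading.normalize u v).1 ((F.union G).leading.normalize u v).2 := by
  set x := ((F.union G).leading.normalize u v).1
  set y := ((F.union G).leading.normalize u v).2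
  have hxy : (F.leading.eval (x ++ y), G.leading.eval (x ++ y)) =
      (F.leading.eval x, G.leading.eval x) := by
    rw [← DetAuto.eval_prod, ← DetAuto.eval_prod]
    exact DetAuto.eval_normalize_append _ u v
  obtain ⟨hF, hG⟩ := Prod.mk.inj hxy
  rw [F.accept_iff_of_eval_append_eq hF, G.accept_iff_of_eval_append_eq hG, Accept,
    progAccept_union]
  simp only [union, DetAuto.eval_prod]
  rfl

lemma accept_union_iff_of_saturated [Inhabited α] {F G : FDFA α} (hF : F.Saturated)
    (hG : G.Saturated) (u : List α) {v : List α} (hv : v ≠ []) :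
    (F.union G).Accept u v ↔ F.Accept u v ∨ G.Accept u v := by
  set A := (F.union G).leading
  have hy := A.normalize_snd_ne_nil u hv
  have hw := A.upWord_normalize u hv
  rw [accept_union_iff, hF _ _ u v hy hv hw, hG _ _ u v hy hv hw]

end FDFA

/-- For saturated FDFAs `F₁, F₂`, the product FDFA `H'` with accepting
sets `(F₁ × A₂) ∪ (A₁ × F₂)` recognizes `L(F₁) ∪ L(F₂)`, and `H'` is saturated. -/
theorem fdfa_union_correct {α : Type} [Inhabited α] (F₁ F₂ : FDFA α)
    (h₁ : F₁.Saturated) (h₂ : F₂.Saturated) :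
    (∀ u v : List α, v ≠ [] →
      ((F₁.union F₂).Accept u v ↔ F₁.Accept u v ∨ F₂.Accept u v)) ∧
    (F₁.union F₂).Saturated := by
  have hunion : ∀ u v : List α, v ≠ [] →
      ((F₁.union F₂).Accept u v ↔ F₁.Accept u v ∨ F₂.Accept u v) :=
    fun u _ hv => FDFA.accept_union_iff_of_saturated h₁ h₂ u hv
  refine ⟨hunion, fun u v u' v' hv hv' hw => ?_⟩
  rw [hunion u v hv, hunion u' v' hv', h₁ u v u' v' hv hv' hw, h₂ u v u' v' hv hv' hw]
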